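/- Let p ∈ 2ℕ* and let A : Y → L^p(μ), B : Y → L^p(ν) be bounded linear maps on a Banach space Y such that ‖ζ‖_Y := ‖Aζ‖_{L^p(μ)} + ‖Bζ‖_{L^p(ν)} is a norm on Y. For bounded linear functionals ℓ₁, ℓ₂ on Y, let ζ̄₁, ζ̄₂ be the respective minimizers of J_i(ζ) = (1/p)‖Aζ‖^p_{L^p(μ)} + (1/p)‖Bζ‖^p_{L^p(ν)} − ℓ_i(ζ). Then ‖ζ̄₁ − ζ̄₂‖_Y^p ≤ C‖ℓ₁ − ℓ₂‖_{Y*}^{p'}, i.e. the minimizer depends (1/(p−1))-Hölder continuously on the data. -/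

import Mathlib

/-!
Rather than subtracting Euler–Lagrange equations, compare each minimizer `ζᵢ` with the midpoint
`m = (ζ₁ + ζ₂) / 2`. Adding the two minimality inequalities, the energy
`f ζ = (‖A ζ‖ ^ p + ‖B ζ‖ ^ p) / p` satisfies `f ζ₁ + f ζ₂ - 2 f m ≤ (ℓ₁ - ℓ₂) ((ζ₁ - ζ₂) / 2)`,
while Clarkson's inequality `‖(u + v) / 2‖ ^ p + ‖(u - v) / 2‖ ^ p ≤ (‖u‖ ^ p + ‖v‖ ^ p) / 2`
in `Lᵖ` (elementary for even `p`) bounds the left side below by `2 f ((ζ₁ - ζ₂) / 2)`.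
As `‖ζ‖ ^ p ≤ 2 ^ (p - 1) p f ζ`, this yields `‖ζ₁ - ζ₂‖ ^ (p - 1) ≲ ‖ℓ₁ - ℓ₂‖`; raising it to the
power `p' = p / (p - 1)` gives the claim.
-/

open MeasureTheory Set
open scoped ENNReal

def IsClarkson {E : Type*} [AddCommGroup E] [Module ℝ E] (f : E → ℝ) : Prop :=
  ∀ x y, f ((2⁻¹ : ℝ) • (x + y)) + f ((2⁻¹ : ℝ) • (x - y)) ≤ (f x + f y) / 2

namespace IsClarkson

variable {E F : Type*} [AddCommGroup E] [Module ℝ E] [AddCommGroup F] [Module ℝ F]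
  {f g : E → ℝ}

theorem add (hf : IsClarkson f) (hg : IsClarkson g) : IsClarkson fun x => f x + g x :=
  fun x y => by linarith [hf x y, hg x y]

theorem const_mul (hf : IsClarkson f) {c : ℝ} (hc : 0 ≤ c) : IsClarkson fun x => c * f x :=
  fun x y => by nlinarith [hf x y]

theorem comp_linearMap {f : F → ℝ} (hf : IsClarkson f) (L : E →ₗ[ℝ] F) : IsClarkson (f ∘ L) :=
  fun x y => by simpa only [Function.comp_apply, map_smul, map_add, map_sub] using hf (L x) (L y)

theorem two_mul_apply_half_sub_le_of_isMinOn {E : Type*} [NormedAddCommGroup E] [NormedSpace ℝ E]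
    {f : E → ℝ} (hf : IsClarkson f) {ℓ₁ ℓ₂ : E →L[ℝ] ℝ} {ζ₁ ζ₂ : E}
    (h₁ : IsMinOn (fun ζ => f ζ - ℓ₁ ζ) univ ζ₁) (h₂ : IsMinOn (fun ζ => f ζ - ℓ₂ ζ) univ ζ₂) :
    2 * f ((2⁻¹ : ℝ) • (ζ₁ - ζ₂)) ≤ ‖ℓ₁ - ℓ₂‖ * ‖(2⁻¹ : ℝ) • (ζ₁ - ζ₂)‖ := by
  set m : E := (2⁻¹ : ℝ) • (ζ₁ + ζ₂)
  set h : E := (2⁻¹ : ℝ) • (ζ₁ - ζ₂)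
  have hm₁ : f ζ₁ - ℓ₁ ζ₁ ≤ f m - ℓ₁ m := h₁ (mem_univ m)
  have hm₂ : f ζ₂ - ℓ₂ ζ₂ ≤ f m - ℓ₂ m := h₂ (mem_univ m)
  have hlin : ℓ₁ ζ₁ + ℓ₂ ζ₂ - ℓ₁ m - ℓ₂ m = (ℓ₁ - ℓ₂) h := by
    simp only [m, h, sub_apply, map_smul, map_add, map_sub, smul_eq_mul]
    ring
  have hbound : (ℓ₁ - ℓ₂) h ≤ ‖ℓ₁ - ℓ₂‖ * ‖h‖ := (le_abs_self _).trans ((ℓ₁ - ℓ₂).le_opNorm h)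
  have hc : f m + f h ≤ (f ζ₁ + f ζ₂) / 2 := hf ζ₁ ζ₂
  linarith

theorem norm_sub_pow_le_of_isMinOn {E : Type*} [NormedAddCommGroup E] [NormedSpace ℝ E]
    {f : E → ℝ} (hf : IsClarkson f) {p : ℕ} {c : ℝ} (hc : 0 ≤ c)
    (hcoer : ∀ z, ‖z‖ ^ p ≤ c * f z) {ℓ₁ ℓ₂ : E →L[ℝ] ℝ} {ζ₁ ζ₂ : E}
    (h₁ : IsMinOn (fun ζ => f ζ - ℓ₁ ζ) univ ζ₁) (h₂ : IsMinOn (fun ζ => f ζ - ℓ₂ ζ) univ ζ₂) :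
    ‖ζ₁ - ζ₂‖ ^ p ≤ 2 ^ p * c / 4 * ‖ℓ₁ - ℓ₂‖ * ‖ζ₁ - ζ₂‖ := by
  set h : E := (2⁻¹ : ℝ) • (ζ₁ - ζ₂)
  have hh : ‖h‖ = ‖ζ₁ - ζ₂‖ / 2 := by
    rw [norm_smul, Real.norm_of_nonneg (by norm_num)]
    ring
  have hmin : 2 * f h ≤ ‖ℓ₁ - ℓ₂‖ * ‖h‖ := hf.two_mul_apply_half_sub_le_of_isMinOn h₁ h₂
  have hhalf : 2 * ‖h‖ ^ p ≤ c * ‖ℓ₁ - ℓ₂‖ * ‖h‖ := calc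
    2 * ‖h‖ ^ p ≤ c * (2 * f h) := by linarith [hcoer h]
    _ ≤ c * (‖ℓ₁ - ℓ₂‖ * ‖h‖) := by gcongr
    _ = c * ‖ℓ₁ - ℓ₂‖ * ‖h‖ := by ring
  rw [hh, div_pow] at hhalf
  field_simp at hhalf
  linarith

end IsClarkson

theorem Even.isClarkson_pow {n : ℕ} (hn : Even n) (hn0 : n ≠ 0) :
    IsClarkson fun x : ℝ => x ^ n := by
  intro a b
  obtain ⟨m, rfl⟩ := hn
  have hm : m ≠ 0 := by omega
  simp only [smul_eq_mul, ← two_mul, pow_mul]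
  have hsum : (2⁻¹ * (a + b)) ^ 2 + (2⁻¹ * (a - b)) ^ 2 = 2⁻¹ * a ^ 2 + 2⁻¹ * b ^ 2 := by ring
  calc ((2⁻¹ * (a + b)) ^ 2) ^ m + ((2⁻¹ * (a - b)) ^ 2) ^ m
      ≤ ((2⁻¹ * (a + b)) ^ 2 + (2⁻¹ * (a - b)) ^ 2) ^ m :=
        pow_add_pow_le (sq_nonneg _) (sq_nonneg _) hm
    _ = ((2⁻¹ : ℝ) • a ^ 2 + (2⁻¹ : ℝ) • b ^ 2) ^ m := by rw [hsum, smul_eq_mul, smul_eq_mul]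
    _ ≤ (2⁻¹ : ℝ) • (a ^ 2) ^ m + (2⁻¹ : ℝ) • (b ^ 2) ^ m :=
        (convexOn_pow m).2 (sq_nonneg a) (sq_nonneg b) (by norm_num) (by norm_num) (by norm_num)
    _ = ((a ^ 2) ^ m + (b ^ 2) ^ m) / 2 := by simp only [smul_eq_mul]; ring

namespace MeasureTheory.Lp

variable {α E : Type*} [MeasurableSpace α] {μ : Measure α} [NormedAddCommGroup E] {p : ℕ}

theorem norm_pow_eq_integral_norm_pow (hp : p ≠ 0) (f : Lp E p μ) :
    ‖f‖ ^ p = ∫ a, ‖f a‖ ^ p ∂μ := by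
  have hint : 0 ≤ ∫ a, ‖f a‖ ^ p ∂μ := integral_nonneg fun a => by positivity
  rw [norm_def, toReal_eLpNorm (Lp.aestronglyMeasurable f),
    lpNorm_eq_integral_norm_rpow_toReal (by exact_mod_cast hp) (ENNReal.natCast_ne_top p)
      (Lp.aestronglyMeasurable f)]
  simp only [ENNReal.toReal_natCast, Real.rpow_natCast]
  rw [← Real.rpow_natCast, ← Real.rpow_mul hint, inv_mul_cancel₀ (by exact_mod_cast hp),
    Real.rpow_one]

theorem isClarkson_norm_pow [Fact (1 ≤ (p : ℝ≥0∞))] (hp : Even p) (hp0 : p ≠ 0) :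
    IsClarkson fun f : Lp ℝ p μ => ‖f‖ ^ p := by
  have hnorm (f : Lp ℝ p μ) : ‖f‖ ^ p = ∫ a, f a ^ p ∂μ := by
    simp only [norm_pow_eq_integral_norm_pow hp0, Real.norm_eq_abs, hp.pow_abs]
  have hint (f : Lp ℝ p μ) : Integrable (fun a => f a ^ p) μ := by
    simpa only [Real.norm_eq_abs, hp.pow_abs] using (Lp.memLp f).integrable_norm_pow hp0
  intro f g
  beta_reduce
  rw [hnorm, hnorm, hnorm, hnorm, ← integral_add (hint f) (hint g), ← integral_div,
    ← integral_add (hint _) (hint _)]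
  refine integral_mono_ae ((hint _).add (hint _)) (((hint f).add (hint g)).div_const 2) ?_
  filter_upwards [coeFn_smul (2⁻¹ : ℝ) (f + g), coeFn_smul (2⁻¹ : ℝ) (f - g), coeFn_add f g,
    coeFn_sub f g] with a hadd hsub hf hg
  simp only [hadd, hsub, Pi.smul_apply, hf, hg, Pi.add_apply, Pi.sub_apply]
  exact hp.isClarkson_pow hp0 (f a) (g a)

end MeasureTheory.Lp

theorem rpow_le_of_pow_le_mul_self {s K L : ℝ} {p : ℕ} (hs : 0 ≤ s) (hK : 0 ≤ K) (hL : 0 ≤ L)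
    (hp : 2 ≤ p) (h : s ^ p ≤ K * L * s) :
    s ^ (p : ℝ) ≤ K ^ ((p : ℝ) / ((p : ℝ) - 1)) * L ^ ((p : ℝ) / ((p : ℝ) - 1)) := by
  have hp1 : (0 : ℝ) < (p : ℝ) - 1 := by
    have : (2 : ℝ) ≤ p := by exact_mod_cast hp
    linarith
  rcases hs.eq_or_lt with rfl | hs
  · rw [Real.zero_rpow (by positivity)]
    positivity
  have hpow : s ^ (p - 1) ≤ K * L := by
    refine le_of_mul_le_mul_right ?_ hs
    rwa [pow_sub_one_mul (by omega)]
  have hexp : ((p - 1 : ℕ) : ℝ) * ((p : ℝ) / ((p : ℝ) - 1)) = p := by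
    rw [Nat.cast_sub (by omega), Nat.cast_one]
    field_simp
  calc s ^ (p : ℝ) = (s ^ (p - 1)) ^ ((p : ℝ) / ((p : ℝ) - 1)) := by
        rw [← Real.rpow_natCast s (p - 1), ← Real.rpow_mul hs.le, hexp]
    _ ≤ (K * L) ^ ((p : ℝ) / ((p : ℝ) - 1)) := by gcongr
    _ = K ^ ((p : ℝ) / ((p : ℝ) - 1)) * L ^ ((p : ℝ) / ((p : ℝ) - 1)) := Real.mul_rpow hK hL

/-- Hölder stability of the minimizer of the penalized HUM functional with
respect to the linear data: `‖ζ̄₁ − ζ̄₂‖^p ≤ C‖ℓ₁ − ℓ₂‖^{p'}`. -/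
theorem stmt17 (p : ℕ) (hpeven : Even p) (hp2 : 2 ≤ p)
    [Fact (1 ≤ (p : ENNReal))] :
    ∃ C : ℝ, 0 < C ∧
    ∀ (Y : Type) [NormedAddCommGroup Y] [NormedSpace ℝ Y] [CompleteSpace Y]
      (α β : Type) [MeasurableSpace α] [MeasurableSpace β]
      (μ : Measure α) (ν : Measure β) [SigmaFinite μ] [SigmaFinite ν]
      (A : Y →L[ℝ] Lp ℝ (p : ENNReal) μ) (B : Y →L[ℝ] Lp ℝ (p : ENNReal) ν)
      (ℓ₁ ℓ₂ : Y →L[ℝ] ℝ) (ζ₁ ζ₂ : Y),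
      (∀ ζ : Y, ‖ζ‖ = ‖A ζ‖ + ‖B ζ‖) →
      IsMinOn (fun ζ : Y => (1 / p : ℝ) * ‖A ζ‖ ^ p + (1 / p : ℝ) * ‖B ζ‖ ^ p - ℓ₁ ζ)
        Set.univ ζ₁ →
      IsMinOn (fun ζ : Y => (1 / p : ℝ) * ‖A ζ‖ ^ p + (1 / p : ℝ) * ‖B ζ‖ ^ p - ℓ₂ ζ)
        Set.univ ζ₂ →
      ‖ζ₁ - ζ₂‖ ^ (p : ℝ) ≤ C * ‖ℓ₁ - ℓ₂‖ ^ ((p : ℝ) / ((p : ℝ) - 1)) := by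
  have hp0 : p ≠ 0 := by omega
  refine ⟨(2 ^ p * (2 ^ (p - 1) * p) / 4) ^ ((p : ℝ) / ((p : ℝ) - 1)), by positivity, ?_⟩
  intro Y _ _ _ α β _ _ μ ν _ _ A B ℓ₁ ℓ₂ ζ₁ ζ₂ hnorm h₁ h₂
  have hclark (T : Type) [MeasurableSpace T] (ρ : Measure T) (L : Y →L[ℝ] Lp ℝ p ρ) :
      IsClarkson fun ζ => (1 / p : ℝ) * ‖L ζ‖ ^ p :=
    ((Lp.isClarkson_norm_pow hpeven hp0).comp_linearMap L.toLinearMap).const_mul (by positivity)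
  have hcoer (z : Y) :
      ‖z‖ ^ p ≤ 2 ^ (p - 1) * p * ((1 / p : ℝ) * ‖A z‖ ^ p + (1 / p : ℝ) * ‖B z‖ ^ p) := by
    rw [hnorm z]
    calc (‖A z‖ + ‖B z‖) ^ p ≤ 2 ^ (p - 1) * (‖A z‖ ^ p + ‖B z‖ ^ p) :=
          add_pow_le (norm_nonneg _) (norm_nonneg _) p
      _ = 2 ^ (p - 1) * p * ((1 / p : ℝ) * ‖A z‖ ^ p + (1 / p : ℝ) * ‖B z‖ ^ p) := by
          field_simp
  exact rpow_le_of_pow_le_mul_self (norm_nonneg _) (by positivity) (norm_nonneg _) hp2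
    (((hclark α μ A).add (hclark β ν B)).norm_sub_pow_le_of_isMinOn (by positivity) hcoer h₁ h₂)
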